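/- Let s̃ be a tenable forest ECD with z̃ roots, m̃ vertices, and maximum children number Δ̃. Sample a uniform forest from F_{s̃}, and let X₁,…,X_r be the children-counts of the roots at r distinct positions, with r ≤ m̃/2. Then for any i₁,…,i_r, P(X₁ = i₁,…,X_r = i_r) ≤ r·2^r·(1 + Δ̃/z̃)·(s̃_{i₁}·…·s̃_{i_r})/m̃^r. -/

import Mathlib

open scoped BigOperators Classical
open Filter MeasureTheory

namespace Paper

inductive PlaneTree : Type
  | node : List PlaneTree → PlaneTree

namespace PlaneTree

def deg : PlaneTree → ℕ
  | node ts => ts.length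

mutual
  def pos : PlaneTree → List (List ℕ)
    | node ts => [] :: posF 0 ts
  def posF : ℕ → List PlaneTree → List (List ℕ)
    | _, [] => []
    | i, t :: ts => (pos t).map (fun q => i :: q) ++ posF (i + 1) ts
end

mutual
  def dfsDeg : PlaneTree → List ℕ
    | node ts => ts.length :: dfsDegF ts
  def dfsDegF : List PlaneTree → List ℕ
    | [] => []
    | t :: ts => dfsDeg t ++ dfsDegF ts
end

def subtreeAt : PlaneTree → List ℕ → Option PlaneTree
  | t, [] => some t
  | node ts, i :: p =>
    match ts[i]? with
    | some t' => subtreeAt t' p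
    | none => none

def numChild (t : PlaneTree) (p : List ℕ) : ℕ := ((subtreeAt t p).map deg).getD 0

def IsVertex (t : PlaneTree) (p : List ℕ) : Prop := (subtreeAt t p).isSome

def IsLeaf (t : PlaneTree) (p : List ℕ) : Prop := (subtreeAt t p).isSome ∧ numChild t p = 0

/-- number of vertices of `t` having exactly `i` children (empirical children distribution) -/
def ecd (t : PlaneTree) (i : ℕ) : ℕ :=
  ((pos t).filter fun p => decide (numChild t p = i)).length

/-- ECD of a plane forest with ranked roots -/
def ecdF (f : List PlaneTree) (i : ℕ) : ℕ := (f.map fun t => ecd t i).sum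

/-- number of children of the `j`-th root of a forest -/
def rootDeg (f : List PlaneTree) (j : ℕ) : ℕ := deg (f.getD j (node []))

/-- the set of plane forests with ranked roots with ECD `s` -/
def forestSet (s : ℕ → ℕ) : Set (List PlaneTree) := {f | ∀ i, ecdF f i = s i}

/-- the set of plane trees with ECD `s` -/
def treeSet (s : ℕ → ℕ) : Set PlaneTree := {t | ∀ i, ecd t i = s i}

/-- strict depth-first (preorder) order on positions -/
def dfLT (p q : List ℕ) : Prop := List.Lex (· < ·) p q

def parent (p : List ℕ) : List ℕ := p.dropLast

/-- `q` is a strict ancestor of `p`, i.e. `q ∈ [ρ, p)` -/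
def StrictAnc (q p : List ℕ) : Prop := q <+: p ∧ q ≠ p

/-- admissible (ordered) pair of leaves -/
def Admissible (t : PlaneTree) (u v : List ℕ) : Prop :=
  IsLeaf t u ∧ IsLeaf t v ∧ 2 ≤ v.length ∧
    StrictAnc (parent (parent v)) (parent u) ∧ dfLT (parent u) (parent v)

def ASet (t : PlaneTree) : Set (List ℕ × List ℕ) := {uv | Admissible t uv.1 uv.2}

def fA (t : PlaneTree) (u : List ℕ) : Set (List ℕ) := {v | Admissible t u v}

def B2 (t : PlaneTree) (u : List ℕ) : Set (List ℕ) :=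
  {v | IsVertex t v ∧ 2 ≤ v.length ∧ StrictAnc (parent (parent v)) u}

noncomputable def leafFinset (t : PlaneTree) : Finset (List ℕ) :=
  ((pos t).toFinset).filter fun p => IsLeaf t p

def leafOf {k : ℕ} (w : Fin k → List ℕ × List ℕ) (y : Fin k × Bool) : List ℕ :=
  if y.2 then (w y.1).1 else (w y.1).2

/-- ordered `k`-tuples of admissible pairs using `2k` distinct leaves -/
def AkOrd (t : PlaneTree) (k : ℕ) : Set (Fin k → List ℕ × List ℕ) :=
  {w | (∀ a, Admissible t (w a).1 (w a).2) ∧ Function.Injective (leafOf w)}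

/-- unordered collections of `k` admissible pairs using `2k` distinct leaves -/
def Ak (t : PlaneTree) (k : ℕ) : Set (Finset (List ℕ × List ℕ)) :=
  {x | x.card = k ∧ (∀ uv ∈ x, Admissible t uv.1 uv.2) ∧
    Set.InjOn (fun y : (List ℕ × List ℕ) × Bool => if y.2 then y.1.1 else y.1.2)
      {y | y.1 ∈ x}}

/-- the set `T_s^(k)` of pairs of a plane tree with ECD `s` and a set of `k` admissible pairs -/
def Tsk (s : ℕ → ℕ) (k : ℕ) : Set (PlaneTree × Finset (List ℕ × List ℕ)) :=
  {tx | (∀ i, ecd tx.1 i = s i) ∧ tx.2 ∈ Ak tx.1 k}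

end PlaneTree

/-- labeled plane trees -/
inductive LTree : Type
  | node : ℕ → List LTree → LTree

namespace LTree

mutual
  def shape : LTree → PlaneTree
    | node _ ts => .node (shapeF ts)
  def shapeF : List LTree → List PlaneTree
    | [] => []
    | t :: ts => shape t :: shapeF ts
end

mutual
  def dfsLab : LTree → List ℕ
    | node a ts => a :: dfsLabF ts
  def dfsLabF : List LTree → List ℕ
    | [] => []
    | t :: ts => dfsLab t ++ dfsLabF ts
end

mutual
  def dfsDeg : LTree → List ℕ
    | node _ ts => ts.length :: dfsDegF ts
  def dfsDegF : List LTree → List ℕ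
    | [] => []
    | t :: ts => dfsDeg t ++ dfsDegF ts
end

def subtreeAt : LTree → List ℕ → Option LTree
  | t, [] => some t
  | node _ ts, i :: p =>
    match ts[i]? with
    | some t' => subtreeAt t' p
    | none => none

def labelAt (t : LTree) (p : List ℕ) : ℕ :=
  ((subtreeAt t p).map fun u => match u with | node a _ => a).getD 0

end LTree

/-- partial-sum steps of the permuted walk -/
def steps {m : ℕ} (c : Fin m → ℕ) (π : Equiv.Perm (Fin m)) : List ℤ :=
  List.ofFn fun i => (c (π i) : ℤ) - 1

/-- first index `j ∈ [1, length]` at which the partial sums attain their minimum -/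
noncomputable def firstMinIdx (l : List ℤ) : ℕ :=
  WithTop.untopD 0 ((Finset.Icc 1 l.length).filter fun j =>
      ∀ j' ∈ Finset.Icc 1 l.length, (l.take j).sum ≤ (l.take j').sum).min

/-- the DFS vertex sequence obtained by rotating the uniformly permuted vertex
sequence at the first minimum of its Łukasiewicz-type walk (Vervaat transform) -/
noncomputable def rotSeq {m : ℕ} (c : Fin m → ℕ) (π : Equiv.Perm (Fin m)) : List (Fin m) :=
  (List.ofFn fun i => π i).rotate (firstMinIdx (steps c π))

/-- the degree of a vertex in a (simple) edge set -/
def degIn (E : Finset (Sym2 ℕ)) (v : ℕ) : ℕ := (E.filter fun e => v ∈ e).card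

/-- degree of a vertex in a multigraph given by an edge multiset (loops count twice) -/
def mdeg (E : Multiset (Sym2 ℕ)) (v : ℕ) : ℕ :=
  (E.map fun e => (if v ∈ e then 1 else 0) + (if e = s(v, v) then 1 else 0)).sum

/-- connectivity of a (multi)graph on vertex set `V` with edges `E` -/
def ConnOn (V : Finset ℕ) (E : Set (Sym2 ℕ)) : Prop :=
  ∀ a ∈ V, ∀ b ∈ V, Relation.ReflTransGen (fun a b => s(a, b) ∈ E) a b

/-- the set of simple connected labeled graphs on `{1, …, m}` with degree sequence `d` -/
def GconSet (m : ℕ) (d : ℕ → ℕ) : Set (Finset (Sym2 ℕ)) :=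
  {E | (∀ e ∈ E, ¬ e.IsDiag) ∧ (∀ e ∈ E, ∀ v ∈ e, v ∈ Finset.Icc 1 m) ∧
       (∀ v ∈ Finset.Icc 1 m, degIn E v = d v) ∧ ConnOn (Finset.Icc 1 m) (E : Set (Sym2 ℕ))}

/-- ECD of the children sequence `(d̃₂ − 1, …, d̃_{m̃} − 1, 0, …, 0)` (with `2k` zeros) -/
def ecdFromDeg (m k : ℕ) (d : ℕ → ℕ) (i : ℕ) : ℕ :=
  ((Finset.Icc 2 m).filter fun j => d j = i + 1).card + if i = 0 then 2 * k else 0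

/-- `≪` order on admissible pairs -/
def pairLT (a b : List ℕ × List ℕ) : Prop :=
  PlaneTree.dfLT (PlaneTree.parent a.1) (PlaneTree.parent b.1) ∨
    (PlaneTree.parent a.1 = PlaneTree.parent b.1 ∧
      PlaneTree.dfLT (PlaneTree.parent a.2) (PlaneTree.parent b.2))

/-- labeled elements of `T_s^(k)` as in the sampling algorithm: a labeled plane tree whose
labels are `{2, …, m̃ + 2k}`, in which the vertex labeled `j ≤ m̃` has `d̃_j − 1` children and
the vertices labeled `> m̃` are leaves, together with a `≪`-increasing tuple of `k` admissible
pairs of leaves with distinct leaves, the `j`-th pair carrying labels `(m̃+2j−1, m̃+2j)`. -/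
def IsLabeledElement (m k : ℕ) (d : ℕ → ℕ) (t : LTree)
    (x : Fin k → List ℕ × List ℕ) : Prop :=
  (LTree.dfsLab t).Perm (List.range' 2 (m - 1 + 2 * k)) ∧
  (∀ p ∈ PlaneTree.pos (LTree.shape t),
    PlaneTree.numChild (LTree.shape t) p =
      (if 2 ≤ LTree.labelAt t p ∧ LTree.labelAt t p ≤ m then d (LTree.labelAt t p) - 1 else 0)) ∧
  (∀ j, PlaneTree.Admissible (LTree.shape t) (x j).1 (x j).2) ∧
  Function.Injective (PlaneTree.leafOf x) ∧
  (∀ j j' : Fin k, j < j' → pairLT (x j) (x j')) ∧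
  (∀ j : Fin k, LTree.labelAt t (x j).1 = m + 2 * (j : ℕ) + 1 ∧
      LTree.labelAt t (x j).2 = m + 2 * (j : ℕ) + 2)

/-- the edge multiset of the graph `I(t, x)`: tree edges, with the leaves of the admissible
pairs deleted and an edge joining the two parents of each admissible pair added -/
noncomputable def Iedges (t : LTree) {k : ℕ} (x : Fin k → List ℕ × List ℕ) :
    Multiset (Sym2 ℕ) :=
  (↑(((PlaneTree.pos (LTree.shape t)).filter fun p =>
        decide (p ≠ ([] : List ℕ) ∧ ∀ j, p ≠ (x j).1 ∧ p ≠ (x j).2)).map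
      fun p => s(LTree.labelAt t (PlaneTree.parent p), LTree.labelAt t p)) : Multiset (Sym2 ℕ))
  + ↑(List.ofFn fun j =>
      s(LTree.labelAt t (PlaneTree.parent (x j).1), LTree.labelAt t (PlaneTree.parent (x j).2)))

/- Brownian excursion: Gaussian/Bessel kernels and finite-dimensional densities -/
noncomputable def gaussD (s x : ℝ) : ℝ := Real.exp (-(x ^ 2) / (2 * s)) / Real.sqrt (2 * Real.pi * s)

noncomputable def killedK (s x y : ℝ) : ℝ := gaussD s (y - x) - gaussD s (y + x)

noncomputable def bes3K (s x y : ℝ) : ℝ := (y / x) * killedK s x y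

noncomputable def exStart (t x : ℝ) : ℝ :=
  Real.sqrt (2 / Real.pi) * x ^ 2 * t ^ (-(3 : ℝ) / 2) * Real.exp (-(x ^ 2) / (2 * t))

noncomputable def exEnd (s x : ℝ) : ℝ := (2 / s) * gaussD s x

/-- finite-dimensional density of the standard Brownian excursion at times `t 0 < … < t n` -/
noncomputable def exFdd {n : ℕ} (t : Fin (n + 1) → ℝ) (x : Fin (n + 1) → ℝ) : ℝ :=
  if ∀ i, 0 < x i then
    Real.sqrt (Real.pi / 2) * exStart (t 0) (x 0) *
      (∏ i : Fin n, bes3K (t i.succ - t i.castSucc) (x i.castSucc) (x i.succ)) *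
      exEnd (1 - t (Fin.last n)) (x (Fin.last n))
  else 0

/-- `e` is a standard Brownian excursion on `[0,1]`: continuous nonnegative paths vanishing at
the endpoints, positive inside, with the excursion finite-dimensional densities. -/
def IsStdBrownianExcursion {Ω : Type*} [MeasureSpace Ω] (e : Ω → ℝ → ℝ) : Prop :=
  (∀ ω, Continuous (e ω)) ∧ (∀ ω, e ω 0 = 0) ∧ (∀ ω, e ω 1 = 0) ∧
  (∀ ω, ∀ x ∈ Set.Ioo (0 : ℝ) 1, 0 < e ω x) ∧
  (∀ t : ℝ, Measurable fun ω => e ω t) ∧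
  ∀ (n : ℕ) (t : Fin (n + 1) → ℝ), StrictMono t → 0 < t 0 → t (Fin.last n) < 1 →
    Measure.map (fun ω i => e ω (t i)) (volume : Measure Ω)
      = volume.withDensity fun x => ENNReal.ofReal (exFdd t x)

/-- `j`-th smallest value (0-based) among `ω 0, …, ω (m−1)` -/
noncomputable def orderStat {m : ℕ} (ω : Fin m → ℝ) (j : ℕ) : ℝ :=
  ((Multiset.map ω Finset.univ.val).sort (· ≤ ·)).getD j 0

end Paper

/-!
Deleting the `j`-th root of a forest and promoting its `c` children to roots is a bijection
from the forests with ECD `s` whose `j`-th root has `c` children onto the forests with ECD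
`s - δ_c`, and it leaves the first `j` roots untouched. Applied to the first root, it gives
the recursion `|F_s| ∏ s_b! = ∑_c s_c |F_{s-δ_c}| ∏ (s-δ_c)_b!`, whence
`|F_s| ∏ s_b! = z (m-1)!`.
Applied to the requested roots from the rightmost one leftwards, it shows that the joint event
has `|F_{s'}|` elements, `s' = s - δ_{i₁} - … - δ_{i_r}`, so its probability is
`(z'/z) · ((m-r-1)!/(m-1)!) · ∏ s_b!/∏ s'_b!` with `z' = z - r + ∑ i_a` (the event is empty
when the `i_a` cannot be removed from `s`).
The bound then follows from `z' ≤ r (z + Δ)`, `(m-1)!/(m-r-1)! ≥ (m-r)^r ≥ (m/2)^r` and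
`n!/(n-k)! ≤ n^k`.
-/

open scoped Nat

lemma Set.Finite.ncard_eq_sum_ncard_fiberwise {α β : Type*} {s : Set α} (hs : s.Finite)
    {g : α → β} {t : Finset β} (h : ∀ x ∈ s, g x ∈ t) :
    s.ncard = ∑ b ∈ t, {x ∈ s | g x = b}.ncard := by
  classical
  lift s to Finset α using hs
  rw [Set.ncard_coe_finset, Finset.card_eq_sum_card_fiberwise h]
  refine Finset.sum_congr rfl fun b _ => ?_
  rw [← Set.ncard_coe_finset, Finset.coe_filter]
  rfl

namespace Paper.PlaneTree

lemma numChild_node_nil (ts : List PlaneTree) : numChild (node ts) [] = ts.length := rfl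

lemma numChild_node_cons {ts : List PlaneTree} {k : ℕ} {t : PlaneTree} (h : ts[k]? = some t)
    (q : List ℕ) : numChild (node ts) (k :: q) = numChild t q := by
  simp [numChild, subtreeAt, h]

mutual
theorem map_numChild_pos : ∀ t : PlaneTree, (pos t).map (numChild t) = dfsDeg t
  | node ts => by
    rw [pos, dfsDeg, List.map_cons, numChild_node_nil, map_numChild_posF ts ts 0 (by simp)]

theorem map_numChild_posF : ∀ (ts us : List PlaneTree) (k : ℕ), us.drop k = ts →
    (posF k ts).map (numChild (node us)) = dfsDegF ts
  | [], _, _, _ => rfl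
  | t :: ts, us, k, h => by
    have ht : us[k]? = some t := by
      rw [← List.head?_drop, h, List.head?_cons]
    have hts : us.drop (k + 1) = ts := by
      rw [← List.drop_drop, h, List.drop_one, List.tail_cons]
    rw [posF, dfsDegF, List.map_append, List.map_map, map_numChild_posF ts us (k + 1) hts,
      ← map_numChild_pos t]
    congr 1
    exact List.map_congr_left fun q _ => numChild_node_cons ht q
end

lemma ecd_eq_count (t : PlaneTree) (b : ℕ) : ecd t b = (dfsDeg t).count b := by
  rw [ecd, ← map_numChild_pos, List.count, List.countP_map, List.countP_eq_length_filter]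
  rfl

lemma ecdF_eq_count (f : List PlaneTree) (b : ℕ) : ecdF f b = (dfsDegF f).count b := by
  induction f with
  | nil => rfl
  | cons t f ih => simp [ecdF, dfsDegF, ← ih, ecd_eq_count]

lemma ecdF_cons (t : PlaneTree) (f : List PlaneTree) (b : ℕ) :
    ecdF (t :: f) b = ecd t b + ecdF f b := by
  simp [ecdF]

lemma ecdF_append (f g : List PlaneTree) (b : ℕ) :
    ecdF (f ++ g) b = ecdF f b + ecdF g b := by
  simp [ecdF]

lemma ecd_node (ts : List PlaneTree) (b : ℕ) :
    ecd (node ts) b = ecdF ts b + if ts.length = b then 1 else 0 := by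
  simp [ecd_eq_count, ecdF_eq_count, dfsDeg, List.count_cons]

mutual
theorem sum_dfsDeg_add_one : ∀ t : PlaneTree, (dfsDeg t).sum + 1 = (dfsDeg t).length
  | node ts => by
    have := sum_dfsDegF_add_length ts
    simp only [dfsDeg, List.sum_cons, List.length_cons]
    omega

theorem sum_dfsDegF_add_length : ∀ f : List PlaneTree,
    (dfsDegF f).sum + f.length = (dfsDegF f).length
  | [] => rfl
  | t :: f => by
    have := sum_dfsDeg_add_one t
    have := sum_dfsDegF_add_length f
    simp only [dfsDegF, List.sum_append, List.length_append, List.length_cons]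
    omega
end

lemma map_deg_sublist_dfsDegF (f : List PlaneTree) : (f.map deg).Sublist (dfsDegF f) := by
  induction f with
  | nil => exact List.Sublist.slnil
  | cons t f ih =>
    cases t with
    | node ts =>
      simp only [List.map_cons, deg, dfsDegF, dfsDeg, List.cons_append]
      exact (ih.trans (List.sublist_append_right _ _)).cons_cons _

lemma map_rootDeg_range (f : List PlaneTree) :
    (List.range f.length).map (rootDeg f) = f.map deg := by
  refine List.ext_getElem (by simp) fun k hk _ => ?_
  simp [rootDeg, List.getElem?_eq_getElem (by simpa using hk)]

lemma rootDeg_take {f : List PlaneTree} {k n : ℕ} (h : k < n) :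
    rootDeg (f.take n) k = rootDeg f k := by
  simp [rootDeg, List.getD_eq_getElem?_getD, List.getElem?_take_of_lt h]

variable {s : ℕ → ℕ} {M z : ℕ}

section ForestSet

variable {f : List PlaneTree}

lemma one_le_of_mem_dfsDegF (hf : f ∈ forestSet s) {x : ℕ} (hx : x ∈ dfsDegF f) :
    1 ≤ s x := by
  rw [← hf x, ecdF_eq_count]
  exact List.count_pos_iff.mpr hx

lemma one_le_apply_rootDeg (hf : f ∈ forestSet s) {j : ℕ} (hj : j < f.length) :
    1 ≤ s (rootDeg f j) := by
  refine one_le_of_mem_dfsDegF hf ((map_deg_sublist_dfsDegF f).subset ?_)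
  rw [← map_rootDeg_range]
  exact List.mem_map_of_mem (List.mem_range.mpr hj)

lemma length_add_sum_mul_eq_sum (hsupp : ∀ b, M ≤ b → s b = 0) (hf : f ∈ forestSet s) :
    f.length + ∑ b ∈ Finset.range M, b * s b = ∑ b ∈ Finset.range M, s b := by
  have hM : ∀ x ∈ (dfsDegF f : Multiset ℕ), x ∈ Finset.range M := fun x hx => by
    by_contra h
    have := one_le_of_mem_dfsDegF hf hx
    rw [hsupp x (by simpa using h)] at this
    omega
  have hcount : ∀ b, s b = (dfsDegF f : Multiset ℕ).count b := fun b => by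
    rw [← hf b, ecdF_eq_count, Multiset.coe_count]
  simp only [hcount, Multiset.sum_count_eq_card hM, mul_comm _ (Multiset.count _ _),
    ← smul_eq_mul,
    ← Finset.sum_multiset_count_of_subset _ _ fun x hx => hM x (Multiset.mem_toFinset.mp hx),
    Multiset.sum_coe, Multiset.coe_card]
  have := sum_dfsDegF_add_length f
  omega

lemma length_eq_of_mem_forestSet {m : ℕ} (hsupp : ∀ b, M ≤ b → s b = 0)
    (hm : m = ∑ b ∈ Finset.range M, s b) (hz : m = z + ∑ b ∈ Finset.range M, b * s b)
    (hf : f ∈ forestSet s) : f.length = z := by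
  have := length_add_sum_mul_eq_sum hsupp hf
  omega

lemma forestSet_eq_singleton_nil (hs : ∀ b, s b = 0) : forestSet s = {[]} := by
  ext f
  simp only [forestSet, hs, ecdF_eq_count, List.count_eq_zero, Set.mem_ofPred_eq,
    Set.mem_singleton_iff]
  constructor
  · intro h
    cases f with
    | nil => rfl
    | cons t f => cases t with
      | node ts => exact absurd (by simp [dfsDegF, dfsDeg]) (h ts.length)
  · rintro rfl b
    simp [dfsDegF]

lemma forestSet_eq_empty (hsupp : ∀ b, M ≤ b → s b = 0)
    (hz : ∑ b ∈ Finset.range M, s b = ∑ b ∈ Finset.range M, b * s b)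
    (hs : ∑ b ∈ Finset.range M, s b ≠ 0) : forestSet s = ∅ := by
  refine Set.eq_empty_of_forall_notMem fun f hf => hs ?_
  have hnil : f = [] := List.eq_nil_of_length_eq_zero (by
    have := length_add_sum_mul_eq_sum hsupp hf; omega)
  subst hnil
  exact Finset.sum_eq_zero fun b _ => (hf b).symm

lemma count_map_le_of_rootDeg_eq {ι : Type*} (hf : f ∈ forestSet s) (j i : ι → ℕ)
    (A : Finset ι) (hj : Set.InjOn j A) (hjf : ∀ a ∈ A, j a < f.length)
    (hfi : ∀ a ∈ A, rootDeg f (j a) = i a) (b : ℕ) :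
    (A.val.map i).count b ≤ s b := by
  have hmap : A.val.map i = (A.val.map j).map (rootDeg f) := by
    rw [Multiset.map_map]
    exact Multiset.map_congr rfl fun a ha => (hfi a ha).symm
  have hle : A.val.map j ≤ Multiset.range f.length :=
    (Multiset.le_iff_subset (A.nodup.map_on fun x hx y hy => hj hx hy)).mpr fun x hx => by
      obtain ⟨a, ha, rfl⟩ := Multiset.mem_map.mp hx
      exact Multiset.mem_range.mpr (hjf a ha)
  calc (A.val.map i).count b
      ≤ ((Multiset.range f.length).map (rootDeg f)).count b := by
        rw [hmap]; exact Multiset.count_le_of_le _ (Multiset.map_le_map hle)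
    _ = (f.map deg).count b := by
        rw [Multiset.range, Multiset.map_coe, map_rootDeg_range, Multiset.coe_count]
    _ ≤ (dfsDegF f).count b := (map_deg_sublist_dfsDegF f).count_le b
    _ = s b := by rw [← ecdF_eq_count, hf b]

end ForestSet

section Erase

/-- The ECD `s - ∑_{d ∈ D} δ_d`, truncated at `0`. -/
def ecdErase (s : ℕ → ℕ) (D : Multiset ℕ) (b : ℕ) : ℕ := s b - D.count b

variable {D : Multiset ℕ}

@[simp]
lemma ecdErase_zero (s : ℕ → ℕ) : ecdErase s 0 = s := by
  funext b
  simp [ecdErase]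

lemma ecdErase_ecdErase_singleton (s : ℕ → ℕ) (c : ℕ) (D : Multiset ℕ) :
    ecdErase (ecdErase s {c}) D = ecdErase s (c ::ₘ D) := by
  funext b
  simp only [ecdErase, Multiset.count_singleton, Multiset.count_cons, Nat.sub_sub, add_comm]

lemma ecdErase_eq_zero (hsupp : ∀ b, M ≤ b → s b = 0) (D : Multiset ℕ) :
    ∀ b, M ≤ b → ecdErase s D b = 0 :=
  fun b hb => by simp [ecdErase, hsupp b hb]

lemma count_singleton_le {c : ℕ} (hc : 1 ≤ s c) : ∀ b, ({c} : Multiset ℕ).count b ≤ s b :=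
  fun b => by
    rw [Multiset.count_singleton]
    split_ifs with h
    exacts [h ▸ hc, Nat.zero_le _]

lemma mem_range_of_count_le (hsupp : ∀ b, M ≤ b → s b = 0) (hD : ∀ b, D.count b ≤ s b) :
    ∀ x ∈ D, x ∈ Finset.range M := fun x hx => by
  by_contra h
  have := (Multiset.count_pos.mpr hx).trans_le (hD x)
  rw [hsupp x (by simpa using h)] at this
  omega

lemma sum_ecdErase_add_card (hsupp : ∀ b, M ≤ b → s b = 0) (hD : ∀ b, D.count b ≤ s b) :
    ∑ b ∈ Finset.range M, ecdErase s D b + Multiset.card D = ∑ b ∈ Finset.range M, s b := by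
  rw [← Multiset.sum_count_eq_card (mem_range_of_count_le hsupp hD), ← Finset.sum_add_distrib]
  exact Finset.sum_congr rfl fun b _ => Nat.sub_add_cancel (hD b)

lemma sum_mul_ecdErase_add_sum (hsupp : ∀ b, M ≤ b → s b = 0)
    (hD : ∀ b, D.count b ≤ s b) :
    ∑ b ∈ Finset.range M, b * ecdErase s D b + D.sum = ∑ b ∈ Finset.range M, b * s b := by
  rw [Finset.sum_multiset_count_of_subset D (Finset.range M)
      fun x hx => mem_range_of_count_le hsupp hD x (Multiset.mem_toFinset.mp hx),
    ← Finset.sum_add_distrib]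
  refine Finset.sum_congr rfl fun b _ => ?_
  rw [smul_eq_mul, mul_comm (D.count b), ← mul_add, ecdErase, Nat.sub_add_cancel (hD b)]

lemma sum_ecdErase_singleton_add_one (hsupp : ∀ b, M ≤ b → s b = 0) {c : ℕ}
    (hc : 1 ≤ s c) :
    ∑ b ∈ Finset.range M, ecdErase s {c} b + 1 = ∑ b ∈ Finset.range M, s b := by
  simpa using sum_ecdErase_add_card hsupp (count_singleton_le hc)

lemma sum_mul_ecdErase_singleton_add (hsupp : ∀ b, M ≤ b → s b = 0) {c : ℕ}
    (hc : 1 ≤ s c) :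
    ∑ b ∈ Finset.range M, b * ecdErase s {c} b + c = ∑ b ∈ Finset.range M, b * s b := by
  simpa using sum_mul_ecdErase_add_sum hsupp (count_singleton_le hc)

lemma prod_factorial_eq_prod_descFactorial_mul (hD : ∀ b, D.count b ≤ s b) :
    ∏ b ∈ Finset.range M, (s b)! =
      (∏ b ∈ Finset.range M, (s b).descFactorial (D.count b)) *
        ∏ b ∈ Finset.range M, (ecdErase s D b)! := by
  rw [← Finset.prod_mul_distrib]
  exact Finset.prod_congr rfl fun b _ => by
    rw [mul_comm, ecdErase, Nat.factorial_mul_descFactorial (hD b)]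

lemma prod_descFactorial_le_prod_map (hsupp : ∀ b, M ≤ b → s b = 0)
    (hD : ∀ b, D.count b ≤ s b) :
    ∏ b ∈ Finset.range M, (s b).descFactorial (D.count b) ≤ (D.map s).prod := by
  rw [Finset.prod_multiset_map_count, Finset.prod_subset
      (fun x hx => mem_range_of_count_le hsupp hD x (Multiset.mem_toFinset.mp hx))
      fun b _ hb => by rw [Multiset.count_eq_zero_of_notMem (by simpa using hb), pow_zero]]
  exact Finset.prod_le_prod' fun b _ => Nat.descFactorial_le_pow _ _

lemma prod_descFactorial_count_singleton {c : ℕ} (hc : c < M) :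
    ∏ b ∈ Finset.range M, (s b).descFactorial (({c} : Multiset ℕ).count b) = s c := by
  rw [Finset.prod_eq_single_of_mem c (Finset.mem_range.mpr hc) fun b _ hb => by simp [hb]]
  simp

end Erase

section Graft

def children : PlaneTree → List PlaneTree
  | node ts => ts

def pruneRoot (j : ℕ) (f : List PlaneTree) : List PlaneTree :=
  f.take j ++ children (f.getD j (node [])) ++ f.drop (j + 1)

def graftRoot (j c : ℕ) (g : List PlaneTree) : List PlaneTree :=
  g.take j ++ node ((g.drop j).take c) :: g.drop (j + c)

variable {A B C : List PlaneTree} {j : ℕ}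

lemma exists_eq_append_node_cons {f : List PlaneTree} (hj : j < f.length) :
    ∃ A C B, A.length = j ∧ f = A ++ node C :: B := by
  refine ⟨f.take j, children f[j], f.drop (j + 1), by simp [hj.le], ?_⟩
  conv_lhs => rw [← List.take_append_drop j f, List.drop_eq_getElem_cons hj]
  cases f[j]; rfl

lemma exists_eq_append_append {g : List PlaneTree} {c : ℕ} (h : j + c ≤ g.length) :
    ∃ A C B, A.length = j ∧ C.length = c ∧ g = A ++ C ++ B :=
  ⟨g.take j, (g.drop j).take c, g.drop (j + c), by simp; omega, by simp; omega, by
    rw [List.append_assoc, ← List.drop_drop, List.take_append_drop, List.take_append_drop]⟩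

lemma graftRoot_append (hA : A.length = j) :
    graftRoot j C.length (A ++ C ++ B) = A ++ node C :: B := by
  subst hA
  simp [graftRoot, List.drop_append]

lemma pruneRoot_append (hA : A.length = j) : pruneRoot j (A ++ node C :: B) = A ++ C ++ B := by
  subst hA
  simp [pruneRoot, children, List.drop_append]

lemma take_append_of_length_eq (hA : A.length = j) : (A ++ B).take j = A := by
  subst hA; simp

lemma rootDeg_append_node_cons (hA : A.length = j) : rootDeg (A ++ node C :: B) j = C.length := by
  subst hA; simp [rootDeg, deg]

lemma ecdF_append_node_cons (b : ℕ) :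
    ecdF (A ++ node C :: B) b = ecdF (A ++ C ++ B) b + if C.length = b then 1 else 0 := by
  simp only [ecdF_append, ecdF_cons, ecd_node]
  omega

lemma append_node_cons_mem_forestSet_iff (hs : 1 ≤ s C.length) :
    A ++ node C :: B ∈ forestSet s ↔ A ++ C ++ B ∈ forestSet (ecdErase s {C.length}) := by
  refine forall_congr' fun b => ?_
  rw [ecdF_append_node_cons, ecdErase, Multiset.count_singleton]
  by_cases hb : C.length = b
  · subst hb; simp only [if_true]; omega
  · simp only [hb, Ne.symm hb, if_false]; omega

theorem bijOn_graftRoot {c : ℕ} (hsupp : ∀ b, M ≤ b → s b = 0)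
    (hz : ∑ b ∈ Finset.range M, s b = z + ∑ b ∈ Finset.range M, b * s b) (hj : j < z)
    (hc : 1 ≤ s c) (P : List PlaneTree → Prop) :
    Set.BijOn (graftRoot j c) {g ∈ forestSet (ecdErase s {c}) | P (g.take j)}
      {f ∈ forestSet s | rootDeg f j = c ∧ P (f.take j)} := by
  have hlen_f : ∀ f ∈ forestSet s, j < f.length := fun f hf => by
    have := length_add_sum_mul_eq_sum hsupp hf; omega
  have hlen_g : ∀ g ∈ forestSet (ecdErase s {c}), j + c ≤ g.length := fun g hg => by
    have := length_add_sum_mul_eq_sum (ecdErase_eq_zero hsupp _) hg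
    have := sum_ecdErase_singleton_add_one hsupp hc
    have := sum_mul_ecdErase_singleton_add hsupp hc
    omega
  refine Set.InvOn.bijOn (f' := pruneRoot j) ⟨?_, ?_⟩ ?_ ?_
  · rintro g ⟨hg, -⟩
    obtain ⟨A, C, B, hA, rfl, rfl⟩ := exists_eq_append_append (hlen_g g hg)
    rw [graftRoot_append hA, pruneRoot_append hA]
  · rintro f ⟨hf, hroot, -⟩
    obtain ⟨A, C, B, hA, rfl⟩ := exists_eq_append_node_cons (hlen_f f hf)
    rw [rootDeg_append_node_cons hA] at hroot
    subst hroot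
    rw [pruneRoot_append hA, graftRoot_append hA]
  · rintro g ⟨hg, hP⟩
    obtain ⟨A, C, B, hA, rfl, rfl⟩ := exists_eq_append_append (hlen_g g hg)
    rw [List.append_assoc, take_append_of_length_eq hA] at hP
    rw [graftRoot_append hA]
    exact ⟨(append_node_cons_mem_forestSet_iff hc).mpr hg, rootDeg_append_node_cons hA,
      by rwa [take_append_of_length_eq hA]⟩
  · rintro f ⟨hf, hroot, hP⟩
    obtain ⟨A, C, B, hA, rfl⟩ := exists_eq_append_node_cons (hlen_f f hf)
    rw [rootDeg_append_node_cons hA] at hroot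
    subst hroot
    rw [take_append_of_length_eq hA] at hP
    rw [pruneRoot_append hA]
    exact ⟨(append_node_cons_mem_forestSet_iff hc).mp hf,
      by rwa [List.append_assoc, take_append_of_length_eq hA]⟩

end Graft

/-- Splitting `forestSet s` according to the number `c` of children of the first root. -/
theorem forestSet_finite_and_ncard_mul_prod_factorial_eq_sum (hsupp : ∀ b, M ≤ b → s b = 0)
    (hz : ∑ b ∈ Finset.range M, s b = z + ∑ b ∈ Finset.range M, b * s b) (hz0 : 0 < z)
    (hfin : ∀ c < M, 1 ≤ s c → (forestSet (ecdErase s {c})).Finite) :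
    (forestSet s).Finite ∧
      (forestSet s).ncard * ∏ b ∈ Finset.range M, (s b)! =
        ∑ c ∈ Finset.range M, s c * ((forestSet (ecdErase s {c})).ncard *
          ∏ b ∈ Finset.range M, (ecdErase s {c} b)!) := by
  have hbij : ∀ c, 1 ≤ s c → Set.BijOn (graftRoot 0 c) (forestSet (ecdErase s {c}))
      {f ∈ forestSet s | rootDeg f 0 = c} := fun c hc => by
    simpa using bijOn_graftRoot hsupp hz hz0 hc fun _ => True
  have hroot : ∀ f ∈ forestSet s, 1 ≤ s (rootDeg f 0) := fun f hf =>
    one_le_apply_rootDeg hf (by have := length_add_sum_mul_eq_sum hsupp hf; omega)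
  have hrootM : ∀ f ∈ forestSet s, rootDeg f 0 ∈ Finset.range M := fun f hf => by
    by_contra h
    have := hroot f hf
    rw [hsupp _ (by simpa using h)] at this
    omega
  have hfiber_empty : ∀ c, s c = 0 → {f ∈ forestSet s | rootDeg f 0 = c} = ∅ :=
    fun c hc => Set.eq_empty_of_forall_notMem fun f ⟨hf, hfc⟩ => by
      have := hroot f hf
      rw [hfc, hc] at this
      omega
  have hfiber_finite : ∀ c ∈ Finset.range M, {f ∈ forestSet s | rootDeg f 0 = c}.Finite :=
    fun c hcM => by
      rcases Nat.eq_zero_or_pos (s c) with hc | hc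
      · exact hfiber_empty c hc ▸ Set.finite_empty
      · exact (hbij c hc).finite_iff_finite.mp (hfin c (by simpa using hcM) hc)
  have hF : (forestSet s).Finite :=
    ((Finset.range M).finite_toSet.biUnion hfiber_finite).subset fun f hf =>
      Set.mem_biUnion (hrootM f hf) ⟨hf, rfl⟩
  refine ⟨hF, ?_⟩
  rw [hF.ncard_eq_sum_ncard_fiberwise hrootM, Finset.sum_mul]
  refine Finset.sum_congr rfl fun c hcM => ?_
  rcases Nat.eq_zero_or_pos (s c) with hc | hc
  · rw [hfiber_empty c hc, Set.ncard_empty, hc, zero_mul, zero_mul]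
  · rw [← (hbij c hc).ncard_eq, prod_factorial_eq_prod_descFactorial_mul (count_singleton_le hc),
      prod_descFactorial_count_singleton (by simpa using hcM)]
    ring

theorem forestSet_finite_and_ncard_mul_prod_factorial (hsupp : ∀ b, M ≤ b → s b = 0) {n : ℕ}
    (hn : ∑ b ∈ Finset.range M, s b = n + 1)
    (hz : ∑ b ∈ Finset.range M, s b = z + ∑ b ∈ Finset.range M, b * s b) :
    (forestSet s).Finite ∧ (forestSet s).ncard * ∏ b ∈ Finset.range M, (s b)! = z * n ! := by
  induction n generalizing s z with
  | zero =>
    rcases Nat.eq_zero_or_pos z with rfl | hz0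
    · simp [forestSet_eq_empty hsupp (by omega) (by omega)]
    have hs' : ∀ c, 1 ≤ s c → ∀ b, ecdErase s {c} b = 0 := fun c hc b => by
      have := sum_ecdErase_singleton_add_one hsupp hc
      rcases lt_or_ge b M with hb | hb
      · exact Finset.sum_eq_zero_iff.mp (by omega) b (Finset.mem_range.mpr hb)
      · exact ecdErase_eq_zero hsupp _ b hb
    obtain ⟨hF, hcount⟩ := forestSet_finite_and_ncard_mul_prod_factorial_eq_sum hsupp hz hz0
      fun c _ hc => by simp [forestSet_eq_singleton_nil (hs' c hc)]
    have hterm : ∀ c ∈ Finset.range M, s c * ((forestSet (ecdErase s {c})).ncard *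
        ∏ b ∈ Finset.range M, (ecdErase s {c} b)!) = s c := fun c _ => by
      rcases Nat.eq_zero_or_pos (s c) with hc | hc
      · simp [hc]
      · simp [forestSet_eq_singleton_nil (hs' c hc), hs' c hc]
    refine ⟨hF, ?_⟩
    rw [hcount, Finset.sum_congr rfl hterm, Nat.factorial_zero]
    change ∑ c ∈ Finset.range M, s c = z * 1
    omega
  | succ n ih =>
    rcases Nat.eq_zero_or_pos z with rfl | hz0
    · simp [forestSet_eq_empty hsupp (by omega) (by omega)]
    have ih' : ∀ c, 1 ≤ s c → (forestSet (ecdErase s {c})).Finite ∧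
        (forestSet (ecdErase s {c})).ncard * ∏ b ∈ Finset.range M, (ecdErase s {c} b)! =
          (z - 1 + c) * n ! := fun c hc =>
      have := sum_ecdErase_singleton_add_one hsupp hc
      have := sum_mul_ecdErase_singleton_add hsupp hc
      ih (ecdErase_eq_zero hsupp _) (by omega) (by omega)
    obtain ⟨hF, hcount⟩ := forestSet_finite_and_ncard_mul_prod_factorial_eq_sum hsupp hz hz0
      fun c _ hc => (ih' c hc).1
    have hterm : ∀ c ∈ Finset.range M, s c * ((forestSet (ecdErase s {c})).ncard *
        ∏ b ∈ Finset.range M, (ecdErase s {c} b)!) = ((z - 1) * s c + c * s c) * n ! :=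
      fun c _ => by
        rcases Nat.eq_zero_or_pos (s c) with hc | hc
        · simp [hc]
        · rw [(ih' c hc).2]; ring
    refine ⟨hF, ?_⟩
    rw [hcount, Finset.sum_congr rfl hterm, ← Finset.sum_mul, Finset.sum_add_distrib,
      ← Finset.mul_sum, Nat.factorial_succ, ← mul_assoc]
    congr 1
    obtain ⟨w, rfl⟩ : ∃ w, z = w + 1 := ⟨z - 1, by omega⟩
    rw [Nat.add_sub_cancel, hn]
    nlinarith

theorem ncard_rootDeg_eq_ncard_forestSet_ecdErase {ι : Type*} (hsupp : ∀ b, M ≤ b → s b = 0)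
    (hz : ∑ b ∈ Finset.range M, s b = z + ∑ b ∈ Finset.range M, b * s b)
    (j i : ι → ℕ) (A : Finset ι) (hj : Set.InjOn j A) (hjz : ∀ a ∈ A, j a < z)
    (hD : ∀ b, (A.val.map i).count b ≤ s b) :
    {f ∈ forestSet s | ∀ a ∈ A, rootDeg f (j a) = i a}.ncard =
      (forestSet (ecdErase s (A.val.map i))).ncard := by
  classical
  -- Pruning the rightmost requested root leaves the positions of the others unchanged.
  induction A using Finset.induction_on_max_value j generalizing s z with
  | empty => simp
  | insert a A haA hmax ih =>
    have hval : (insert a A).val.map i = i a ::ₘ A.val.map i := by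
      rw [Finset.insert_val_of_notMem haA, Multiset.map_cons]
    rw [hval] at hD ⊢
    have hjlt : ∀ x ∈ A, j x < j a := fun x hx =>
      (hmax x hx).lt_of_ne fun h => haA (hj (by simp [hx]) (by simp) h ▸ hx)
    have hc : 1 ≤ s (i a) := by
      have := hD (i a); rw [Multiset.count_cons_self] at this; omega
    have hja := hjz a (by simp)
    have := sum_ecdErase_singleton_add_one hsupp hc
    have := sum_mul_ecdErase_singleton_add hsupp hc
    have hbij := bijOn_graftRoot hsupp hz hja hc
      fun g => ∀ x ∈ A, rootDeg g (j x) = i x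
    have hprefix : ∀ g : List PlaneTree, (∀ x ∈ A, rootDeg (g.take (j a)) (j x) = i x) ↔
        ∀ x ∈ A, rootDeg g (j x) = i x :=
      fun g => forall₂_congr fun x hx => by rw [rootDeg_take (hjlt x hx)]
    simp only [hprefix] at hbij
    simp only [Finset.forall_mem_insert]
    rw [← hbij.ncard_eq, ih (ecdErase_eq_zero hsupp _) (z := z - 1 + i a) (by omega)
      (hj.mono (by simp)) (fun x hx => by have := hjlt x hx; omega)
      fun b => ?_, ecdErase_ecdErase_singleton]
    have := hD b
    rw [Multiset.count_cons] at this
    rw [ecdErase, Multiset.count_singleton]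
    omega

theorem ncard_rootDeg_div_ncard_forestSet {ι : Type*} [Fintype ι] {m : ℕ}
    (hsupp : ∀ b, M ≤ b → s b = 0) (hm : m = ∑ b ∈ Finset.range M, s b)
    (hz : m = z + ∑ b ∈ Finset.range M, b * s b) (hz0 : 0 < z) (hιm : Fintype.card ι < m)
    (j i : ι → ℕ) (hj : Function.Injective j) (hjz : ∀ a, j a < z)
    (hD : ∀ b, (Finset.univ.val.map i).count b ≤ s b) :
    ({f ∈ forestSet s | ∀ a, rootDeg f (j a) = i a}.ncard : ℝ) / (forestSet s).ncard =
      ((z - Fintype.card ι + ∑ a, i a : ℕ) / z) *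
        ((m - Fintype.card ι - 1)! / (m - 1)! : ℝ) *
        ((∏ b ∈ Finset.range M, (s b)! : ℕ) /
          (∏ b ∈ Finset.range M, (ecdErase s (Finset.univ.val.map i) b)! : ℕ)) := by
  have hιz : Fintype.card ι ≤ z := by
    have := Finset.card_le_card_of_injOn (s := Finset.univ) (t := Finset.range z) j
      (fun a _ => Finset.mem_range.mpr (hjz a)) hj.injOn
    rwa [Finset.card_univ, Finset.card_range] at this
  have hcard := sum_ecdErase_add_card hsupp hD
  have hsum := sum_mul_ecdErase_add_sum hsupp hD
  rw [Multiset.card_map, Finset.card_val, Finset.card_univ] at hcard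
  rw [Finset.sum_map_val] at hsum
  have hevent := ncard_rootDeg_eq_ncard_forestSet_ecdErase hsupp (hm ▸ hz) j i Finset.univ
    hj.injOn (fun a _ => hjz a) hD
  simp only [Finset.mem_univ, true_implies] at hevent
  obtain ⟨-, hF⟩ := forestSet_finite_and_ncard_mul_prod_factorial hsupp (n := m - 1)
    (by omega) (hm ▸ hz)
  obtain ⟨-, hE⟩ := forestSet_finite_and_ncard_mul_prod_factorial
    (s := ecdErase s (Finset.univ.val.map i)) (ecdErase_eq_zero hsupp _)
    (n := m - Fintype.card ι - 1) (z := z - Fintype.card ι + ∑ a, i a) (by omega) (by omega)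
  rw [← hevent] at hE
  have hFR : ((forestSet s).ncard : ℝ) =
      z * (m - 1)! / (∏ b ∈ Finset.range M, (s b)! : ℕ) := by
    rw [eq_div_iff (by positivity)]
    exact_mod_cast hF
  have hER : ({f ∈ forestSet s | ∀ a, rootDeg f (j a) = i a}.ncard : ℝ) =
      (z - Fintype.card ι + ∑ a, i a : ℕ) * (m - Fintype.card ι - 1)! /
        (∏ b ∈ Finset.range M, (ecdErase s (Finset.univ.val.map i) b)! : ℕ) := by
    rw [eq_div_iff (by positivity)]
    exact_mod_cast hE
  rw [hER, hFR]
  field_simp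

lemma factorial_div_factorial_le_two_pow_div_pow {m r : ℕ} (h : 2 * r ≤ m) (hm : 0 < m) :
    ((m - r - 1)! / (m - 1)! : ℝ) ≤ 2 ^ r / m ^ r := by
  have hdesc : m ^ r ≤ 2 ^ r * (m - 1).descFactorial r :=
    calc m ^ r ≤ (2 * (m - 1 + 1 - r)) ^ r := Nat.pow_le_pow_left (by omega) r
      _ = 2 ^ r * (m - 1 + 1 - r) ^ r := mul_pow _ _ _
      _ ≤ 2 ^ r * (m - 1).descFactorial r :=
        Nat.mul_le_mul_left _ (Nat.pow_sub_le_descFactorial _ _)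
  rw [div_le_div_iff₀ (by positivity) (by positivity), ← Nat.sub_right_comm,
    ← Nat.factorial_mul_descFactorial (show r ≤ m - 1 by omega)]
  exact_mod_cast by nlinarith [Nat.factorial_pos (m - 1 - r)]

lemma cast_sub_add_sum_div_le {ι : Type*} [Fintype ι] (i : ι → ℕ) {z Δ : ℕ} (hz : 0 < z)
    (hι : 1 ≤ Fintype.card ι) (hiΔ : ∀ a, i a ≤ Δ) :
    ((z - Fintype.card ι + ∑ a, i a : ℕ) / z : ℝ) ≤ Fintype.card ι * (1 + Δ / z) := by
  have hsum : ∑ a, i a ≤ Fintype.card ι * Δ := by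
    simpa using Finset.sum_le_sum fun a (_ : a ∈ Finset.univ) => hiΔ a
  have hz' : z ≤ Fintype.card ι * z := Nat.le_mul_of_pos_left z hι
  rw [div_le_iff₀ (by positivity), mul_assoc, one_add_mul, div_mul_cancel₀ _ (by positivity)]
  exact_mod_cast (by rw [mul_add]; omega : z - Fintype.card ι + ∑ a, i a ≤ _)

lemma prod_factorial_div_prod_factorial_ecdErase_le {ι : Type*} [Fintype ι]
    (hsupp : ∀ b, M ≤ b → s b = 0) (i : ι → ℕ)
    (hD : ∀ b, (Finset.univ.val.map i).count b ≤ s b) :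
    ((∏ b ∈ Finset.range M, (s b)! : ℕ) /
      (∏ b ∈ Finset.range M, (ecdErase s (Finset.univ.val.map i) b)! : ℕ) : ℝ) ≤
      ∏ a, (s (i a) : ℝ) := by
  have hdesc := prod_descFactorial_le_prod_map hsupp hD
  rw [Multiset.map_map, Finset.prod_map_val] at hdesc
  rw [div_le_iff₀ (by positivity)]
  exact_mod_cast prod_factorial_eq_prod_descFactorial_mul hD ▸ Nat.mul_le_mul_right _ hdesc

end Paper.PlaneTree

open Paper Paper.PlaneTree in
/-- joint upper bound on root children counts of a uniform forest. -/
theorem forest_roots_joint_upper (s : ℕ → ℕ) (M z m Δ r : ℕ)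
    (hsupp : ∀ i, M ≤ i → s i = 0)
    (hm : m = ∑ i ∈ Finset.range M, s i)
    (hz : m = z + ∑ i ∈ Finset.range M, i * s i)
    (hz1 : 1 ≤ z)
    (hΔ : s Δ ≠ 0) (hΔ' : ∀ i, Δ < i → s i = 0)
    (hr : 1 ≤ r) (hrz : r ≤ z) (hrm : 2 * r ≤ m)
    (j : Fin r → ℕ) (hj : Function.Injective j) (hjz : ∀ a, j a < z)
    (i : Fin r → ℕ) :
    ({f ∈ forestSet s | ∀ a, rootDeg f (j a) = i a}.ncard : ℝ)
        / (forestSet s).ncard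
      ≤ (r : ℝ) * 2 ^ r * (1 + (Δ : ℝ) / z) * (∏ a, (s (i a) : ℝ)) / (m : ℝ) ^ r := by
  by_cases hD : ∀ b, (Finset.univ.val.map i).count b ≤ s b
  swap
  · have hempty : {f ∈ forestSet s | ∀ a, rootDeg f (j a) = i a} = ∅ :=
      Set.eq_empty_of_forall_notMem fun f ⟨hf, hfi⟩ => hD <|
        count_map_le_of_rootDeg_eq hf j i Finset.univ hj.injOn
          (fun a _ => length_eq_of_mem_forestSet hsupp hm hz hf ▸ hjz a) fun a _ => hfi a
    rw [hempty, Set.ncard_empty, Nat.cast_zero, zero_div]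
    positivity
  have hiΔ : ∀ a, i a ≤ Δ := fun a => Nat.lt_succ_iff.mp <| Finset.mem_range.mp <|
    mem_range_of_count_le (M := Δ + 1) (fun b hb => hΔ' b hb) hD (i a)
      (Multiset.mem_map_of_mem i (Finset.mem_univ_val a))
  have hm0 : 0 < m := by omega
  rw [ncard_rootDeg_div_ncard_forestSet hsupp hm hz hz1 (by simp; omega) j i hj hjz hD]
  calc _ ≤ (r * (1 + Δ / z) : ℝ) * (2 ^ r / m ^ r) * ∏ a, (s (i a) : ℝ) := by
        gcongr ?_ * ?_ * ?_
        · simpa using cast_sub_add_sum_div_le i hz1 (by simpa using hr) hiΔ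
        · simpa using factorial_div_factorial_le_two_pow_div_pow hrm hm0
        · exact prod_factorial_div_prod_factorial_ecdErase_le hsupp i hD
    _ = _ := by ring
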